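/- For total configurations γ and δ of a constraint graph G, if γ ∼ δ (connected by reconfiguration steps possibly passing through partial configurations), then γ and δ are also connected by a sequence of reconfiguration steps passing only through total configurations. -/
import Mathlib


namespace NCL

/-- A constraint graph: vertices `V`, edges `E`, an inflow constraint on each
vertex, an endpoint set of one or two vertices for each edge, and a weight on
each edge. -/
structure CGraph (V E : Type) where
  c : V → ℕ
  ends : E → Finset V
  ends_card : ∀ e, (ends e).card = 1 ∨ (ends e).card = 2
  w : E → ℕ

variable {V E : Type}

/-- A partial configuration: it directs each edge to one of its endpoints or
leaves it undefined (`none`), and the inflow of every vertex (the total weight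
of its incoming edges) meets its inflow constraint. -/
def IsPConfig [Fintype E] [DecidableEq V] (G : CGraph V E) (γ : E → Option V) : Prop :=
  (∀ e v, γ e = some v → v ∈ G.ends e) ∧
  (∀ u : V, G.c u ≤ ∑ e : E, if γ e = some u then G.w e else 0)

/-- The configuration is total: every edge is directed. -/
def IsTotal (γ : E → Option V) : Prop := ∀ e, (γ e).isSome

/-- A reconfiguration step between partial configurations: the value (or
definedness) of exactly one edge changes. -/
def Step [Fintype E] [DecidableEq V] (G : CGraph V E) (γ γ' : E → Option V) : Prop :=
  IsPConfig G γ ∧ IsPConfig G γ' ∧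
  ∃ e, γ e ≠ γ' e ∧ ∀ d, d ≠ e → γ d = γ' d

end NCL

open NCL in
/-- For total configurations `γ` and `δ` of a constraint graph
`G`, if `γ ∼ δ` via reconfiguration steps possibly passing through partial
configurations, then `γ` and `δ` are also connected by a sequence of
reconfiguration steps passing only through total configurations. -/
theorem ncl_total_reconfiguration {V E : Type} [Fintype E] [DecidableEq V]
    (G : CGraph V E) (γ δ : E → Option V)
    (hγ : IsPConfig G γ) (hγt : IsTotal γ)
    (hδ : IsPConfig G δ) (hδt : IsTotal δ)
    (h : Relation.ReflTransGen (Step G) γ δ) :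
    Relation.ReflTransGen
      (fun x y => Step G x y ∧ IsTotal x ∧ IsTotal y) γ δ := by
  classical
  have or_some : ∀ (a : V) (b : Option V), (some a).or b = some a := fun _ _ => rfl
  set fill : (E → Option V) → (E → Option V) := fun x e => (x e).or (γ e) with hfill
  have fill_total : ∀ x, IsTotal (fill x) := by
    intro x e
    cases hx : x e with
    | some v => simp [hfill, hx]
    | none => simpa [hfill, hx] using hγt e
  have fill_pconfig : ∀ x, IsPConfig G x → IsPConfig G (fill x) := by
    intro x hx
    constructor
    · intro e v hv
      cases hxe : x e with
      | some w =>
        simp only [hfill, hxe, or_some] at hv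
        exact hx.1 e v (hxe.trans hv)
      | none =>
        simp only [hfill, hxe, Option.none_or] at hv
        exact hγ.1 e v hv
    · intro u
      refine le_trans (hx.2 u) (Finset.sum_le_sum ?_)
      intro e _
      by_cases hxe : x e = some u
      · simp [hfill, hxe]
      · simp [hxe]
  have fill_eq : ∀ x, IsTotal x → fill x = x := by
    intro x hx
    funext e
    obtain ⟨v, hv⟩ := Option.isSome_iff_exists.mp (hx e)
    simp [hfill, hv]
  have stepcase : ∀ x y, Step G x y →
      Relation.ReflTransGen
        (fun x y => Step G x y ∧ IsTotal x ∧ IsTotal y) (fill x) (fill y) := by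
    intro x y ⟨hx, hy, e, hne, hagree⟩
    by_cases hfe : fill x e = fill y e
    · have : fill x = fill y := by
        funext d
        by_cases hd : d = e
        · subst hd; exact hfe
        · simp [hfill, hagree d hd]
      rw [this]
    · exact Relation.ReflTransGen.single
        ⟨⟨fill_pconfig x hx, fill_pconfig y hy, e, hfe,
          fun d hd => by simp [hfill, hagree d hd]⟩,
         fill_total x, fill_total y⟩
  have key : ∀ {b}, Relation.ReflTransGen (Step G) γ b →
      Relation.ReflTransGen
        (fun x y => Step G x y ∧ IsTotal x ∧ IsTotal y) (fill γ) (fill b) := by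
    intro b hb
    induction hb with
    | refl => exact Relation.ReflTransGen.refl
    | tail _ hbc ih => exact ih.trans (stepcase _ _ hbc)
  have := key h
  rwa [fill_eq γ hγt, fill_eq δ hδt] at this
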